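/- arXiv:2002.08426 — 3 statements merged into one kernel-verified Lean document; each statement's English description precedes it below -/
import Mathlib

section
/- For a smooth function f, the centered (2p+1)-point numerical differentiation formula approximates the k-th derivative with order 2p - k + 1 when k is odd (and order at least 2p - k when k is even): |D^k_{p,i}(f,Δx) − f^{(k)}(x_i)| = O(Δx^{2p−k+1}) for odd k ≤ 2p. -/
/-!
Let `P` be the Taylor polynomial of degree `2p` of `f` at `xᵢ`. Since the formula is exact on `P`
and `P⁽ᵏ⁾(xᵢ) = f⁽ᵏ⁾(xᵢ)`, the error equals `Δx⁻ᵏ ∑ⱼ δⱼ (f - P)(xᵢ + jΔx)`, and Taylor's theorem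
bounds each `(f - P)(xᵢ + jΔx)` by `O(Δx^(2p+1))`.
-/

open Asymptotics Filter Topology Polynomial

noncomputable def taylorPolynomial (f : ℝ → ℝ) (n : ℕ) (x₀ : ℝ) : ℝ[X] :=
  ∑ m ∈ Finset.range (n + 1), C (iteratedDeriv m f x₀ / m.factorial) * (X - C x₀) ^ m

section TaylorPolynomial

variable (f : ℝ → ℝ) (n : ℕ) (x₀ : ℝ)

theorem natDegree_taylorPolynomial_le : (taylorPolynomial f n x₀).natDegree ≤ n := by
  refine natDegree_sum_le_of_forall_le _ _ fun m hm => ?_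
  calc (C (iteratedDeriv m f x₀ / m.factorial) * (X - C x₀) ^ m).natDegree
      ≤ ((X - C x₀) ^ m).natDegree := natDegree_C_mul_le _ _
    _ = m := by rw [natDegree_pow, natDegree_X_sub_C, mul_one]
    _ ≤ n := Nat.lt_succ_iff.mp (Finset.mem_range.mp hm)

theorem eval_taylorPolynomial (x : ℝ) :
    (taylorPolynomial f n x₀).eval x = taylorWithinEval f n Set.univ x₀ x := by
  simp only [taylorPolynomial, taylor_within_apply, iteratedDerivWithin_univ, eval_finsetSum,
    eval_mul, eval_C, eval_pow, eval_sub, eval_X, smul_eq_mul]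
  exact Finset.sum_congr rfl fun m _ => by ring

theorem eval_iterate_derivative_taylorPolynomial {k : ℕ} (hk : k ≤ n) :
    (derivative^[k] (taylorPolynomial f n x₀)).eval x₀ = iteratedDeriv k f x₀ := by
  simp only [taylorPolynomial, iterate_derivative_sum, iterate_derivative_C_mul,
    iterate_derivative_X_sub_pow, eval_finsetSum]
  rw [Finset.sum_eq_single_of_mem k (Finset.mem_range.mpr (by omega))]
  · simp only [Nat.descFactorial_self, tsub_self, pow_zero, nsmul_eq_mul, mul_one, eval_mul, eval_C,
      eval_natCast]
    field_simp
  · intro m _ hmk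
    rcases lt_or_gt_of_ne hmk with h | h
    · simp [Nat.descFactorial_eq_zero_iff_lt.mpr h]
    · simp [zero_pow (Nat.sub_ne_zero_of_lt h)]

variable {f} in
/-- Taylor's theorem with a big-O remainder, obtained from the little-o form one order higher. -/
theorem isBigO_sub_eval_taylorPolynomial (hf : ContDiff ℝ (n + 1) f) :
    (fun x => f x - (taylorPolynomial f n x₀).eval x) =O[𝓝 x₀] fun x => (x - x₀) ^ (n + 1) := by
  have hnext := (taylor_isLittleO_univ (x₀ := x₀) (n := n + 1) (by exact_mod_cast hf)).isBigO
  refine (hnext.add ((isBigO_refl (fun x => (x - x₀) ^ (n + 1)) _).const_mul_left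
    (iteratedDeriv (n + 1) f x₀ / (n + 1).factorial))).congr_left fun x => ?_
  simp only [eval_taylorPolynomial, taylorWithinEval_succ, iteratedDerivWithin_univ, smul_eq_mul,
    Nat.factorial_succ, Nat.cast_mul, Nat.cast_succ]
  field_simp
  ring

end TaylorPolynomial

section Stencil

variable {ι : Type*} (s : Finset ι) (c w : ι → ℝ) (k : ℕ)

/-- The paper's `D^k_{p,i}(f, h)` is `stencilDeriv (Finset.Icc (-p) p) (↑) δ k f xᵢ h`. -/
noncomputable def stencilDeriv (f : ℝ → ℝ) (x h : ℝ) : ℝ :=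
  1 / h ^ k * ∑ j ∈ s, w j * f (x + c j * h)

theorem stencilDeriv_sub (f g : ℝ → ℝ) (x h : ℝ) :
    stencilDeriv s c w k (fun y => f y - g y) x h
      = stencilDeriv s c w k f x h - stencilDeriv s c w k g x h := by
  simp only [stencilDeriv, mul_sub, Finset.sum_sub_distrib]

theorem isBigO_stencil_sum {r : ℝ → ℝ} {x : ℝ} {m : ℕ}
    (hr : r =O[𝓝 x] fun y => (y - x) ^ m) :
    (fun h => ∑ j ∈ s, w j * r (x + c j * h)) =O[𝓝 0] fun h => h ^ m := by
  refine IsBigO.fun_sum fun j _ => IsBigO.const_mul_left ?_ (w j)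
  have hnode : Tendsto (fun h => x + c j * h) (𝓝 0) (𝓝 x) :=
    Continuous.tendsto' (by fun_prop) 0 x (by simp)
  refine (hr.comp_tendsto hnode).trans ?_
  simpa only [Function.comp_def, add_sub_cancel_left, mul_pow] using
    (isBigO_refl (fun h : ℝ => h ^ m) _).const_mul_left (c j ^ m)

variable {s c w k}

theorem isBigO_stencilDeriv_sub_iteratedDeriv {n : ℕ} {f : ℝ → ℝ} {x : ℝ}
    (hexact : ∀ h : ℝ, h ≠ 0 → ∀ P : ℝ[X], P.natDegree ≤ n →
      stencilDeriv s c w k P.eval x h = (derivative^[k] P).eval x)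
    (hk : k ≤ n) (hf : ContDiff ℝ (n + 1) f) :
    (fun h => stencilDeriv s c w k f x h - iteratedDeriv k f x) =O[𝓝[≠] 0]
      fun h => h ^ (n - k + 1) := by
  set P := taylorPolynomial f n x
  have hsum := isBigO_stencil_sum s c w (isBigO_sub_eval_taylorPolynomial n x hf)
  have herror : ∀ h : ℝ, h ≠ 0 → stencilDeriv s c w k f x h - iteratedDeriv k f x
      = (h ^ k)⁻¹ * ∑ j ∈ s, w j * (f (x + c j * h) - P.eval (x + c j * h)) := by
    intro h hh
    rw [← eval_iterate_derivative_taylorPolynomial f n x hk, ← hexact h hh P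
      (natDegree_taylorPolynomial_le f n x), ← stencilDeriv_sub, stencilDeriv, one_div]
  have hpow : ∀ h : ℝ, h ≠ 0 → (h ^ k)⁻¹ * h ^ (n + 1) = h ^ (n - k + 1) := by
    intro h hh
    rw [← Nat.sub_add_comm hk, pow_sub₀ h hh (by omega), mul_comm]
  refine ((isBigO_refl (fun h : ℝ => (h ^ k)⁻¹) _).mul (hsum.mono nhdsWithin_le_nhds)).congr'
    ?_ ?_
  · filter_upwards [self_mem_nhdsWithin] with h hh using (herror h hh).symm
  · filter_upwards [self_mem_nhdsWithin] with h hh using hpow h hh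

end Stencil

theorem exists_pos_bound_of_isBigO_nhdsGT {u : ℝ → ℝ} {m : ℕ}
    (hu : u =O[𝓝[>] 0] fun h => h ^ m) :
    ∃ C > (0 : ℝ), ∃ δ₀ > (0 : ℝ), ∀ h : ℝ, 0 < h → h < δ₀ → |u h| ≤ C * h ^ m := by
  obtain ⟨C, hC, hCu⟩ := hu.exists_pos
  obtain ⟨δ₀, hδ₀, hbound⟩ := (nhdsGT_basis 0).eventually_iff.mp hCu.bound
  refine ⟨C, hC, δ₀, hδ₀, fun h h0 hδ => ?_⟩
  simpa [abs_of_pos h0] using hbound ⟨h0, hδ⟩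

theorem centered_difference_order_odd_general
    (p k : ℕ) (hk : k ≤ 2 * p)
    (xi : ℝ) (δ : ℤ → ℝ)
    (hδ : ∀ h : ℝ, h ≠ 0 → ∀ P : Polynomial ℝ, P.natDegree ≤ 2 * p →
      (1 / h ^ k) * ∑ j ∈ Finset.Icc (-(p : ℤ)) (p : ℤ), δ j * P.eval (xi + (j : ℝ) * h)
        = Polynomial.eval xi (Polynomial.derivative^[k] P))
    (f : ℝ → ℝ) (hf : ContDiff ℝ (2 * p + 1) f) :
    ∃ C > (0 : ℝ), ∃ δ0 > (0 : ℝ), ∀ Δx : ℝ, 0 < Δx → Δx < δ0 →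
      |(1 / Δx ^ k) * ∑ j ∈ Finset.Icc (-(p : ℤ)) (p : ℤ), δ j * f (xi + (j : ℝ) * Δx)
        - iteratedDeriv k f xi| ≤ C * Δx ^ (2 * p - k + 1) := by
  have hf' : ContDiff ℝ (2 * p + 1 : ℕ) f := by exact_mod_cast hf
  exact exists_pos_bound_of_isBigO_nhdsGT
    ((isBigO_stencilDeriv_sub_iteratedDeriv (c := fun j : ℤ => (j : ℝ)) hδ hk hf').mono
      (nhdsGT_le_nhdsNE 0))

/-- For `f` of class `C^{2p+1}` and odd `k ≤ 2p`, the centered `(2p+1)`-point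
interpolatory formula approximates `f^{(k)}(x_i)` with order `2p - k + 1`. -/
theorem centered_difference_order_odd
    (p k : ℕ) (hp : 1 ≤ p) (hk : k ≤ 2 * p) (hkodd : Odd k)
    (xi : ℝ) (δ : ℤ → ℝ)
    (hδ : ∀ h : ℝ, h ≠ 0 → ∀ P : Polynomial ℝ, P.natDegree ≤ 2 * p →
      (1 / h ^ k) * ∑ j ∈ Finset.Icc (-(p : ℤ)) (p : ℤ), δ j * P.eval (xi + (j : ℝ) * h)
        = Polynomial.eval xi (Polynomial.derivative^[k] P))
    (f : ℝ → ℝ) (hf : ContDiff ℝ (2 * p + 1) f) :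
    ∃ C > (0 : ℝ), ∃ δ0 > (0 : ℝ), ∀ Δx : ℝ, 0 < Δx → Δx < δ0 →
      |(1 / Δx ^ k) * ∑ j ∈ Finset.Icc (-(p : ℤ)) (p : ℤ), δ j * f (xi + (j : ℝ) * Δx)
        - iteratedDeriv k f xi| ≤ C * Δx ^ (2 * p - k + 1) :=
  centered_difference_order_odd_general p k hk xi δ hδ f hf
end

section
/- Accuracy of the WENO reconstruction under near-ideal weights: if each candidate polynomial satisfies p_s(x_{i+1/2}) = f(x_{i+1/2}) + O(h^{p+1}), the full-stencil interpolant satisfies P(x_{i+1/2}) = Σ_s c_s p_s(x_{i+1/2}) = f(x_{i+1/2}) + O(h^{2p+1}), and the nonlinear weights satisfy ω_s = c_s + O(h^{p}), then the reconstruction q(x_{i+1/2}) = Σ_s ω_s p_s(x_{i+1/2}) satisfies q(x_{i+1/2}) = f(x_{i+1/2}) + O(h^{2p+1}). -/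
/-- Accuracy of the WENO reconstruction under near-ideal weights: if each
candidate value is accurate to `O(h^{p+1})`, the ideal combination is accurate
to `O(h^{2p+1})` and the nonlinear weights satisfy `ω_s = c_s + O(h^p)` and sum
to one, then the reconstruction is accurate to `O(h^{2p+1})`. -/
theorem weno_reconstruction_accuracy
    (p : ℕ) (hp : 1 ≤ p) (c : Fin (p + 1) → ℝ) (hcsum : ∑ s, c s = 1)
    (ω ps : Fin (p + 1) → ℝ → ℝ) (fval : ℝ → ℝ)
    (C1 C2 C3 δ : ℝ) (hC1 : 0 < C1) (hC2 : 0 < C2) (hC3 : 0 < C3) (hδ : 0 < δ)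
    (hωsum : ∀ h : ℝ, 0 < h → h < δ → ∑ s, ω s h = 1)
    (hps : ∀ s, ∀ h : ℝ, 0 < h → h < δ → |ps s h - fval h| ≤ C1 * h ^ (p + 1))
    (hideal : ∀ h : ℝ, 0 < h → h < δ →
      |(∑ s, c s * ps s h) - fval h| ≤ C2 * h ^ (2 * p + 1))
    (hω : ∀ s, ∀ h : ℝ, 0 < h → h < δ → |ω s h - c s| ≤ C3 * h ^ p) :
    ∃ C > (0 : ℝ), ∀ h : ℝ, 0 < h → h < δ →
      |(∑ s, ω s h * ps s h) - fval h| ≤ C * h ^ (2 * p + 1) := by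
  refine ⟨C2 + (p + 1) * (C3 * C1), by positivity, fun h h0 hδ' => ?_⟩
  have key : (∑ s, ω s h * ps s h) - fval h
      = ((∑ s, c s * ps s h) - fval h) + ∑ s, (ω s h - c s) * (ps s h - fval h) := by
    have h1 : ∑ s, (ω s h - c s) * (ps s h - fval h)
        = (∑ s, ω s h * ps s h) - (∑ s, c s * ps s h)
          - ((∑ s, ω s h) - (∑ s, c s)) * fval h := by
      simp [Finset.sum_sub_distrib, sub_mul, mul_sub, Finset.sum_mul]
    rw [h1, hωsum h h0 hδ', hcsum]
    ring
  rw [key]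
  have hbound : ∀ s : Fin (p + 1), |(ω s h - c s) * (ps s h - fval h)|
      ≤ (C3 * C1) * h ^ (2 * p + 1) := by
    intro s
    rw [abs_mul]
    calc |ω s h - c s| * |ps s h - fval h|
        ≤ (C3 * h ^ p) * (C1 * h ^ (p + 1)) := by
          apply mul_le_mul (hω s h h0 hδ') (hps s h h0 hδ') (abs_nonneg _)
          positivity
      _ = (C3 * C1) * h ^ (2 * p + 1) := by ring
  calc |((∑ s, c s * ps s h) - fval h) + ∑ s, (ω s h - c s) * (ps s h - fval h)|
      ≤ |(∑ s, c s * ps s h) - fval h| + |∑ s, (ω s h - c s) * (ps s h - fval h)| :=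
        abs_add_le _ _
    _ ≤ C2 * h ^ (2 * p + 1) + ∑ s, |(ω s h - c s) * (ps s h - fval h)| := by
        gcongr
        · exact hideal h h0 hδ'
        · exact Finset.abs_sum_le_sum_abs _ _
    _ ≤ C2 * h ^ (2 * p + 1) + ∑ _s : Fin (p + 1), (C3 * C1) * h ^ (2 * p + 1) := by
        gcongr with s
        exact hbound s
    _ = (C2 + (p + 1) * (C3 * C1)) * h ^ (2 * p + 1) := by
        simp [Finset.sum_const, Finset.card_univ]
        ring
end

section
/- The interpolatory reconstruction identity for ideal weights: there exist constants c_0,…,c_p (the ideal linear weights, depending only on p and the evaluation point x_{i+1/2}) such that for every function f, the degree-2p polynomial P interpolating f at the 2p+1 nodes x_{i-p},…,x_{i+p} satisfies P(x_{i+1/2}) = Σ_{s=0}^{p} c_s p_s(x_{i+1/2}), where p_s is the degree-p polynomial interpolating f at x_{i-p+s},…,x_{i+s}. -/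
private lemma ico_int (a b : ℤ) : Finset.Ico a b = Finset.Icc a (b - 1) := by
  ext k; simp only [Finset.mem_Ico, Finset.mem_Icc]; omega

private lemma ioc_int (a b : ℤ) : Finset.Ioc a b = Finset.Icc (a + 1) b := by
  ext k; simp only [Finset.mem_Ioc, Finset.mem_Icc]; omega

private lemma neville_key (p : ℕ) (x : ℤ → ℝ) (hinj : Function.Injective x) (y : ℝ) :
    ∀ n : ℕ, ∀ a : ℤ, ∃ c : ℕ → ℝ, ∀ f : ℤ → ℝ,
      Polynomial.eval y (Lagrange.interpolate (Finset.Icc a (a + (p : ℤ) + (n : ℤ))) x f)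
        = ∑ s ∈ Finset.range (n + 1), c s *
            Polynomial.eval y
              (Lagrange.interpolate (Finset.Icc (a + (s : ℤ)) (a + (s : ℤ) + (p : ℤ))) x f) := by
  intro n
  induction n with
  | zero =>
    intro a
    refine ⟨fun _ => 1, fun f => ?_⟩
    simp
  | succ n ih =>
    intro a
    obtain ⟨c1, hc1⟩ := ih a
    obtain ⟨c2, hc2⟩ := ih (a + 1)
    set b : ℤ := a + (p : ℤ) + ((n : ℤ) + 1) with hb
    have hab : a ≠ b := by omega
    have hmema : a ∈ Finset.Icc a b := by simp [hb]; omega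
    have hmemb : b ∈ Finset.Icc a b := by simp [hb]; omega
    set d1 : ℝ := Polynomial.eval y (Lagrange.basisDivisor (x a) (x b)) with hd1
    set d2 : ℝ := Polynomial.eval y (Lagrange.basisDivisor (x b) (x a)) with hd2
    refine ⟨fun s => d1 * (if s < n + 1 then c1 s else 0)
        + d2 * (if s = 0 then 0 else c2 (s - 1)), fun f => ?_⟩
    have hrec := Lagrange.interpolate_eq_add_interpolate_erase (r := f)
      (hinj.injOn) hmema hmemb hab
    have heraseb : (Finset.Icc a b).erase b = Finset.Icc a (a + (p : ℤ) + (n : ℤ)) := by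
      rw [Finset.Icc_erase_right, ico_int]; congr 1; omega
    have herasea : (Finset.Icc a b).erase a
        = Finset.Icc (a + 1) ((a + 1) + (p : ℤ) + (n : ℤ)) := by
      rw [Finset.Icc_erase_left, ioc_int]; congr 1; omega
    have hLHS : Polynomial.eval y (Lagrange.interpolate (Finset.Icc a ((a : ℤ) + (p : ℤ) + ((n : ℕ) + 1 : ℕ))) x f)
        = d1 * Polynomial.eval y (Lagrange.interpolate (Finset.Icc a (a + (p : ℤ) + (n : ℤ))) x f)
          + d2 * Polynomial.eval y
              (Lagrange.interpolate (Finset.Icc (a + 1) ((a + 1) + (p : ℤ) + (n : ℤ))) x f) := by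
      have hcast : ((a : ℤ) + (p : ℤ) + ((n : ℕ) + 1 : ℕ)) = b := by push_cast [hb]; ring
      rw [hcast, hrec, heraseb, herasea]
      simp [Polynomial.eval_add, Polynomial.eval_mul, hd1, hd2]
      ring
    rw [hLHS, hc1 f, hc2 f]
    rw [Finset.mul_sum, Finset.mul_sum]
    have hsplit : ∀ s ∈ Finset.range (n + 1 + 1),
        (d1 * (if s < n + 1 then c1 s else 0) + d2 * (if s = 0 then 0 else c2 (s - 1))) *
          Polynomial.eval y (Lagrange.interpolate (Finset.Icc (a + (s : ℤ)) (a + (s : ℤ) + (p : ℤ))) x f)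
        = (d1 * (if s < n + 1 then c1 s else 0)) *
            Polynomial.eval y (Lagrange.interpolate (Finset.Icc (a + (s : ℤ)) (a + (s : ℤ) + (p : ℤ))) x f)
          + (d2 * (if s = 0 then 0 else c2 (s - 1))) *
            Polynomial.eval y (Lagrange.interpolate (Finset.Icc (a + (s : ℤ)) (a + (s : ℤ) + (p : ℤ))) x f) := by
      intro s _; ring
    rw [Finset.sum_congr rfl hsplit, Finset.sum_add_distrib]
    congr 1
    · -- first part
      conv_rhs => rw [Finset.sum_range_succ]
      rw [if_neg (lt_irrefl (n+1)), mul_zero, zero_mul, add_zero]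
      refine Finset.sum_congr rfl fun s hs => ?_
      rw [if_pos (Finset.mem_range.mp hs)]
      ring
    · -- second part
      conv_rhs => rw [Finset.sum_range_succ']
      rw [if_pos rfl, mul_zero, zero_mul, add_zero]
      refine Finset.sum_congr rfl fun s _ => ?_
      rw [if_neg (by omega : ¬(s + 1 = 0)), Nat.add_sub_cancel]
      have h1 : (a : ℤ) + ((s + 1 : ℕ) : ℤ) = (a + 1) + (s : ℤ) := by push_cast; ring
      rw [h1]
      ring

/-- Ideal linear weights: there exist constants `c_0,…,c_p`, independent of `f`,
such that the degree-`2p` interpolant on the full stencil evaluated at the cell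
interface equals the corresponding combination of the sub-stencil
interpolants. -/
theorem ideal_linear_weights_exist
    (p : ℕ) (hp : 1 ≤ p) (x0 h : ℝ) (hh : 0 < h) (i : ℤ)
    (x : ℤ → ℝ) (hx : ∀ j : ℤ, x j = x0 + (j : ℝ) * h) :
    ∃ c : ℕ → ℝ, ∀ f : ℤ → ℝ,
      Polynomial.eval (x i + h / 2)
          (Lagrange.interpolate (Finset.Icc (i - (p : ℤ)) (i + (p : ℤ))) x f)
        = ∑ s ∈ Finset.range (p + 1), c s *
            Polynomial.eval (x i + h / 2)
              (Lagrange.interpolate (Finset.Icc (i - (p : ℤ) + (s : ℤ)) (i + (s : ℤ))) x f) := by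
  have hinj : Function.Injective x := by
    intro a b hab
    rw [hx a, hx b] at hab
    have : (a : ℝ) * h = (b : ℝ) * h := by linarith
    have : (a : ℝ) = b := mul_right_cancel₀ (ne_of_gt hh) this
    exact_mod_cast this
  obtain ⟨c, hc⟩ := neville_key p x hinj (x i + h / 2) p (i - (p : ℤ))
  refine ⟨c, fun f => ?_⟩
  have := hc f
  have e1 : i - (p : ℤ) + (p : ℤ) + (p : ℤ) = i + (p : ℤ) := by ring
  rw [e1] at this
  rw [this]
  refine Finset.sum_congr rfl fun s _ => ?_
  have e2 : i - (p : ℤ) + (s : ℤ) + (p : ℤ) = i + (s : ℤ) := by ring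
  rw [e2]
end
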